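/- (Right dominance of Schreier spaces:) Let α be a countable ordinal (with a fixed choice of cofinal sequences defining the Schreier family S_α). If (k_n) and (ℓ_n) are strictly increasing sequences of natural numbers with k_n ≤ ℓ_n for all n, then ‖Σ a_n e_{k_n}‖_α ≤ ‖Σ a_n e_{ℓ_n}‖_α for every finitely supported real sequence (a_n); that is, the unit vector basis of X_α is 1-right dominant. -/

import Mathlib

open Filter Topology Metric

noncomputable section


/-! ### Schreier families on ℕ+ = {1,2,...} -/

/-- The successor step of the Schreier hierarchy. -/
def schreierSucc (S : Set (Finset ℕ+)) : Set (Finset ℕ+) :=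
  insert ∅ {F | ∃ (m : ℕ) (hm : 0 < m) (Es : Fin m → Finset ℕ+),
    (∀ i, Es i ∈ S) ∧ (∀ i, (Es i).Nonempty) ∧
    (∀ i j : Fin m, i < j → ∀ p ∈ Es i, ∀ q ∈ Es j, p < q) ∧
    (∀ p ∈ Es ⟨0, hm⟩, m ≤ (p : ℕ)) ∧
    F = Finset.univ.biUnion Es}

/-- The Schreier family `S_o`, relative to a choice `c` of cofinal sequences at limit
ordinals. -/
def schreier (c : Ordinal → ℕ+ → Ordinal) (o : Ordinal) : Set (Finset ℕ+) :=
  Ordinal.limitRecOn o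
    (insert ∅ {E | ∃ n : ℕ+, E = {n}})
    (fun _ S => schreierSucc S)
    (fun l _ ih =>
      insert ∅ {F | ∃ (n : ℕ+) (h : c l n < l), F ∈ ih (c l n) h ∧ ∀ k ∈ F, n ≤ k})

/-- `c` is a legitimate choice of cofinal sequences: at every countable limit ordinal `o`,
`c o` is a strictly increasing sequence of ordinals below `o` with supremum `o`. -/
def IsCofinalChoice (c : Ordinal → ℕ+ → Ordinal) : Prop :=
  ∀ o : Ordinal, Order.IsSuccLimit o → o < Ordinal.omega 1 →
    StrictMono (c o) ∧ (∀ n : ℕ+, c o n < o) ∧ ∀ b < o, ∃ n : ℕ+, b ≤ c o n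

/-- The Schreier norm `‖x‖_o = sup { Σ_{n ∈ E} |x n| : E ∈ S_o }` of a finitely supported
function. -/
def schreierNorm (c : Ordinal → ℕ+ → Ordinal) (o : Ordinal) (x : ℕ+ →₀ ℝ) : ℝ :=
  sSup {r : ℝ | ∃ E ∈ schreier c o, r = ∑ n ∈ E, |x n|}

/-- The finitely supported function `Σ_n a_n e_{k n}`. -/
def schreierComb (k : ℕ → ℕ+) (a : ℕ →₀ ℝ) : ℕ+ →₀ ℝ :=
  a.sum fun n r => Finsupp.single (k n) r

/-! Every Schreier family is hereditary and spreading: if the points of `F` lie, in order, to the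
right of the points of a subset of some `E ∈ S_α`, then `F ∈ S_α`. This survives the transfinite
induction because the admissibility conditions `m ≤ min E` and `n ≤ min F` only get easier when
points move right. Now if `E ∈ S_α`, the indices `n` with `k n ∈ E` give `F = {l n}`, which is
such a spread of a subset of `E`, and the sum of `|a n|` over these `n` is the `E`-sum for
`Σ a_n e_{k_n}` and the `F`-sum for `Σ a_n e_{l_n}`. -/

section Spreading

variable {S : Set (Finset ℕ+)}

def IsSpreadingHereditary (S : Set (Finset ℕ+)) : Prop :=
  ∀ E ∈ S, ∀ (F : Finset ℕ+) (φ : ℕ+ → ℕ+), StrictMonoOn φ F → Set.MapsTo φ F E →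
    (∀ q ∈ F, φ q ≤ q) → F ∈ S

lemma IsSpreadingHereditary.image_mem (hS : IsSpreadingHereditary S)
    {E : Finset ℕ+} (hE : E ∈ S) {k l : ℕ → ℕ+} (hk : StrictMono k) (hl : StrictMono l)
    (hkl : ∀ n, k n ≤ l n) {N : Finset ℕ} (hN : Set.MapsTo k N E) : N.image l ∈ S := by
  have hφ : ∀ n, k (Function.invFun l (l n)) = k n := fun n => by
    rw [Function.leftInverse_invFun hl.injective n]
  refine hS E hE _ (k ∘ Function.invFun l) ?_ ?_ ?_
  · rw [Finset.coe_image]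
    rintro _ ⟨n, -, rfl⟩ _ ⟨n', -, rfl⟩ h
    simpa only [Function.comp_apply, hφ] using hk (hl.lt_iff_lt.1 h)
  · rw [Finset.coe_image]
    rintro _ ⟨n, hn, rfl⟩
    simpa only [Function.comp_apply, hφ] using hN hn
  · intro q hq
    obtain ⟨n, -, rfl⟩ := Finset.mem_image.1 hq
    simpa only [Function.comp_apply, hφ] using hkl n

lemma isSpreadingHereditary_insert_empty
    (hS : ∀ E ∈ S, ∀ (F : Finset ℕ+) (φ : ℕ+ → ℕ+), F.Nonempty → StrictMonoOn φ F →
      Set.MapsTo φ F E → (∀ q ∈ F, φ q ≤ q) → F ∈ insert ∅ S) :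
    IsSpreadingHereditary (insert ∅ S) := by
  intro E hE F φ hφ hmaps hle
  obtain rfl | ⟨q, hq⟩ := F.eq_empty_or_nonempty
  · exact Set.mem_insert _ _
  rcases hE with rfl | hE
  · exact absurd (hmaps hq) (Finset.notMem_empty _)
  · exact hS E hE F φ ⟨q, hq⟩ hφ hmaps hle

lemma isSpreadingHereditary_card_le_one :
    IsSpreadingHereditary {E : Finset ℕ+ | E.card ≤ 1} :=
  fun _ hE _ _ hφ hmaps _ => (Finset.card_le_card_of_injOn _ hmaps hφ.injOn).trans hE

/-- Unlike in the definition of `schreierSucc`, the blocks may be empty. -/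
lemma biUnion_mem_schreierSucc {m : ℕ} (Gs : Fin m → Finset ℕ+)
    (hmem : ∀ i, Gs i ∈ S) (hord : ∀ i j : Fin m, i < j → ∀ p ∈ Gs i, ∀ q ∈ Gs j, p < q)
    (hmin : ∀ p ∈ Finset.univ.biUnion Gs, m ≤ (p : ℕ)) :
    Finset.univ.biUnion Gs ∈ schreierSucc S := by
  classical
  obtain hempty | ⟨p, hp⟩ := (Finset.univ.biUnion Gs).eq_empty_or_nonempty
  · rw [hempty]; exact Set.mem_insert _ _
  set I := Finset.univ.filter fun i => (Gs i).Nonempty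
  have hI : 0 < I.card := Finset.card_pos.2 <| by
    obtain ⟨i, -, hi⟩ := Finset.mem_biUnion.1 hp
    exact ⟨i, Finset.mem_filter.2 ⟨Finset.mem_univ _, p, hi⟩⟩
  set e := I.orderIsoOfFin rfl
  refine Set.mem_insert_of_mem _ ⟨I.card, hI, fun j => Gs (e j), fun j => hmem _,
    fun j => (Finset.mem_filter.1 (e j).2).2, fun i j hij => hord _ _ (e.strictMono hij),
    fun q hq => ?_, ?_⟩
  · exact (Finset.card_le_univ I).trans <| by
      simpa using hmin q (Finset.mem_biUnion.2 ⟨_, Finset.mem_univ _, hq⟩)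
  · ext q
    simp only [Finset.mem_biUnion, Finset.mem_univ, true_and]
    constructor
    · rintro ⟨i, hi⟩
      obtain ⟨j, hj⟩ := e.surjective ⟨i, Finset.mem_filter.2 ⟨Finset.mem_univ _, q, hi⟩⟩
      exact ⟨j, by rw [hj]; exact hi⟩
    · rintro ⟨j, hj⟩
      exact ⟨_, hj⟩

lemma le_of_mem_biUnion_blocks {m : ℕ} (hm : 0 < m) (Es : Fin m → Finset ℕ+)
    (hne : ∀ i, (Es i).Nonempty) (hord : ∀ i j : Fin m, i < j → ∀ p ∈ Es i, ∀ q ∈ Es j, p < q)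
    (hmin : ∀ p ∈ Es ⟨0, hm⟩, m ≤ (p : ℕ)) : ∀ p ∈ Finset.univ.biUnion Es, m ≤ (p : ℕ) := by
  intro p hp
  obtain ⟨i, -, hi⟩ := Finset.mem_biUnion.1 hp
  obtain h0 | hpos := Nat.eq_zero_or_pos i
  · exact hmin p (by rwa [(Fin.ext h0 : i = ⟨0, hm⟩)] at hi)
  · obtain ⟨p₀, hp₀⟩ := hne ⟨0, hm⟩
    exact (hmin p₀ hp₀).trans (hord _ _ hpos p₀ hp₀ p hi).le

lemma IsSpreadingHereditary.schreierSucc (hS : IsSpreadingHereditary S) :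
    IsSpreadingHereditary (schreierSucc S) := by
  classical
  refine isSpreadingHereditary_insert_empty ?_
  rintro _ ⟨m, hm, Es, hmem, hne, hord, hmin, rfl⟩ F φ - hφ hmaps hle
  have hF : Finset.univ.biUnion (fun i => F.filter fun q => φ q ∈ Es i) = F := by
    ext q
    simp only [Finset.mem_biUnion, Finset.mem_univ, true_and, Finset.mem_filter]
    refine ⟨fun ⟨_, hq, _⟩ => hq, fun hq => ?_⟩
    obtain ⟨i, -, hi⟩ := Finset.mem_biUnion.1 (hmaps hq)
    exact ⟨i, hq, hi⟩
  rw [← hF]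
  refine biUnion_mem_schreierSucc _ (fun i => ?_) (fun i j hij p hp q hq => ?_) ?_
  · refine hS _ (hmem i) _ φ (hφ.mono fun q hq => ?_) (fun q hq => ?_) (fun q hq => ?_)
    all_goals simp only [Finset.coe_filter, Set.mem_ofPred_eq, Finset.mem_filter] at hq
    exacts [hq.1, hq.2, hle q hq.1]
  · simp only [Finset.mem_filter] at hp hq
    exact hφ.lt_iff_lt hp.1 hq.1 |>.1 (hord i j hij _ hp.2 _ hq.2)
  · rw [hF]
    intro q hq
    exact (le_of_mem_biUnion_blocks hm Es hne hord hmin _ (hmaps hq)).trans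
      (PNat.coe_le_coe _ _ |>.2 (hle q hq))

end Spreading

section Schreier

variable (c : Ordinal → ℕ+ → Ordinal)

lemma schreier_zero : schreier c 0 = {E | E.card ≤ 1} := by
  rw [schreier, Ordinal.limitRecOn_zero]
  ext E
  simp only [Set.mem_insert_iff, Set.mem_ofPred_eq, Finset.card_le_one_iff_subset_singleton,
    Finset.subset_singleton_iff]
  grind

lemma schreier_add_one (o : Ordinal) : schreier c (o + 1) = schreierSucc (schreier c o) :=
  Ordinal.limitRecOn_add_one _ _ _ _

lemma schreier_limit {o : Ordinal} (ho : Order.IsSuccLimit o) :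
    schreier c o =
      insert ∅ {F | ∃ (n : ℕ+) (_ : c o n < o), F ∈ schreier c (c o n) ∧ ∀ k ∈ F, n ≤ k} :=
  Ordinal.limitRecOn_limit _ _ _ _ ho

lemma empty_mem_schreier (o : Ordinal) : (∅ : Finset ℕ+) ∈ schreier c o := by
  induction o using Ordinal.limitRecOn with
  | zero => rw [schreier_zero]; simp
  | add_one o _ => rw [schreier_add_one]; exact Set.mem_insert _ _
  | limit o ho _ => rw [schreier_limit c ho]; exact Set.mem_insert _ _

lemma isSpreadingHereditary_schreier (o : Ordinal) : IsSpreadingHereditary (schreier c o) := by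
  induction o using Ordinal.limitRecOn with
  | zero => rw [schreier_zero]; exact isSpreadingHereditary_card_le_one
  | add_one o ih => rw [schreier_add_one]; exact ih.schreierSucc
  | limit o ho ih =>
    rw [schreier_limit c ho]
    refine isSpreadingHereditary_insert_empty ?_
    rintro E ⟨n, hn, hE, hnE⟩ F φ - hφ hmaps hle
    exact Set.mem_insert_of_mem _
      ⟨n, hn, ih _ hn E hE F φ hφ hmaps hle, fun q hq => (hnE _ (hmaps hq)).trans (hle q hq)⟩

lemma schreierNorm_le_of_forall_exists_le {o : Ordinal} {x y : ℕ+ →₀ ℝ}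
    (h : ∀ E ∈ schreier c o, ∃ F ∈ schreier c o, ∑ p ∈ E, |x p| ≤ ∑ p ∈ F, |y p|) :
    schreierNorm c o x ≤ schreierNorm c o y := by
  have hbdd : BddAbove {r : ℝ | ∃ F ∈ schreier c o, r = ∑ p ∈ F, |y p|} := by
    refine ⟨∑ p ∈ y.support, |y p|, ?_⟩
    rintro _ ⟨F, -, rfl⟩
    rw [← Finset.sum_filter_ne_zero]
    exact Finset.sum_le_sum_of_subset_of_nonneg (fun p hp => by simp_all)
      (fun _ _ _ => abs_nonneg _)
  refine Real.sSup_le ?_ (le_csSup hbdd ⟨∅, empty_mem_schreier c o, by simp⟩)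
  rintro _ ⟨E, hE, rfl⟩
  obtain ⟨F, hF, hEF⟩ := h E hE
  exact hEF.trans (le_csSup hbdd ⟨F, hF, rfl⟩)

end Schreier

lemma Finsupp.sum_preimage_mapDomain {α β M N : Type*} [AddCommMonoid M] [AddCommMonoid N]
    {f : α → β} (hf : Function.Injective f) (a : α →₀ M) {g : M → N} (hg : g 0 = 0)
    (s : Finset β) :
    ∑ x ∈ s.preimage f hf.injOn, g (a x) = ∑ y ∈ s, g (mapDomain f a y) := by
  rw [← Finset.sum_preimage f s hf.injOn _ fun y _ hy => by
    rw [mapDomain_of_notMem_range _ _ hy, hg]]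
  simp only [mapDomain_apply hf]

theorem schreier_one_right_dominant_general
    (c : Ordinal → ℕ+ → Ordinal)
    (α : Ordinal)
    (k l : ℕ → ℕ+) (hk : StrictMono k) (hl : StrictMono l) (hkl : ∀ n, k n ≤ l n) :
    ∀ a : ℕ →₀ ℝ,
      schreierNorm c α (schreierComb k a) ≤ schreierNorm c α (schreierComb l a) := by
  intro a
  refine schreierNorm_le_of_forall_exists_le c fun E hE => ?_
  set N := E.preimage k hk.injective.injOn
  have hF : N.image l ∈ schreier c α :=
    (isSpreadingHereditary_schreier c α).image_mem hE hk hl hkl fun _ => Finset.mem_preimage.1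
  refine ⟨N.image l, hF, le_of_eq ?_⟩
  rw [schreierComb, schreierComb, ← Finsupp.mapDomain, ← Finsupp.mapDomain,
    ← Finsupp.sum_preimage_mapDomain hk.injective a abs_zero,
    Finset.sum_image fun n _ n' _ h => hl.injective h]
  simp only [Finsupp.mapDomain_apply hl.injective, N]

/-- The unit vector basis of the Schreier space `X_α` is `1`-right dominant. -/
theorem schreier_one_right_dominant
    (c : Ordinal → ℕ+ → Ordinal) (hc : IsCofinalChoice c)
    (α : Ordinal) (hα : α < Ordinal.omega 1)
    (k l : ℕ → ℕ+) (hk : StrictMono k) (hl : StrictMono l) (hkl : ∀ n, k n ≤ l n) :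
    ∀ a : ℕ →₀ ℝ,
      schreierNorm c α (schreierComb k a) ≤ schreierNorm c α (schreierComb l a) :=
  schreier_one_right_dominant_general c α k l hk hl hkl

end
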